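/- arXiv:1805.03548 — 2 statements merged into one kernel-verified Lean document; each statement's English description precedes it below -/
import Mathlib

section
/- For real q with 0 < q < 1, the limit as q tends to 1 from below of (1-q)^2 times the sum over n ≥ 0 of q^n(1+q^{2n+1})/(1-q^{2n+1})^2 equals π²/4. -/
open Real Filter Set

private lemma odd_basel : HasSum (fun n : ℕ => 1 / (2 * (n:ℝ) + 1) ^ 2) (π ^ 2 / 8) := by
  have he : HasSum (fun k : ℕ => 1 / (2 * (k:ℝ)) ^ 2) (π ^ 2 / 24) := by
    have h := hasSum_zeta_two.mul_left (1/4 : ℝ)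
    have e1 : (1/4 : ℝ) * (π ^ 2 / 6) = π ^ 2 / 24 := by ring
    rw [e1] at h
    refine h.congr_fun fun k => ?_
    rcases eq_or_ne (k : ℝ) 0 with h0 | h0
    · simp [h0]
    · field_simp
      ring
  have hob : Summable (fun k : ℕ => 1 / ((k:ℝ) + 1) ^ 2) := by
    have := (summable_nat_add_iff (f := fun n : ℕ => 1 / (n:ℝ) ^ 2) 1).mpr
      (Real.summable_one_div_nat_pow.mpr one_lt_two)
    refine this.congr fun k => ?_
    push_cast; ring
  have ho : Summable (fun k : ℕ => 1 / (2 * (k:ℝ) + 1) ^ 2) := by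
    refine hob.of_nonneg_of_le (fun k => by positivity) (fun k => ?_)
    apply one_div_le_one_div_of_le (by positivity)
    nlinarith [show (0:ℝ) ≤ (k:ℝ) from Nat.cast_nonneg k]
  have hsum := HasSum.even_add_odd (f := fun n : ℕ => 1 / (n:ℝ) ^ 2)
    (he.congr_fun fun k => by push_cast; ring) (ho.hasSum.congr_fun fun k => by push_cast; ring)
  have huniq := hasSum_zeta_two.unique hsum
  have h8 : ∑' k : ℕ, 1 / (2 * (k:ℝ) + 1) ^ 2 = π ^ 2 / 8 := by linarith [ho.hasSum.tsum_eq]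
  exact h8 ▸ ho.hasSum

theorem sun_zeta2 :
    Tendsto (fun q : ℝ => (1 - q) ^ 2 *
        ∑' n : ℕ, q ^ n * (1 + q ^ (2 * n + 1)) / (1 - q ^ (2 * n + 1)) ^ 2)
      (nhdsWithin 1 (Ioo (0 : ℝ) 1)) (nhds (π ^ 2 / 4)) := by
  have key : Tendsto (fun q : ℝ => ∑' n : ℕ,
      q ^ n * (1 + q ^ (2 * n + 1)) / (∑ i ∈ Finset.range (2 * n + 1), q ^ i) ^ 2)
      (nhdsWithin 1 (Ioo (0 : ℝ) 1)) (nhds (∑' n : ℕ, 2 / (2 * (n:ℝ) + 1) ^ 2)) := by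
    apply tendsto_tsum_of_dominated_convergence (bound := fun n : ℕ => 8 / ((n:ℝ) + 1) ^ 2)
    · have := (summable_nat_add_iff (f := fun n : ℕ => 1 / (n:ℝ) ^ 2) 1).mpr
        (Real.summable_one_div_nat_pow.mpr one_lt_two)
      refine (this.mul_left 8).congr fun k => ?_
      push_cast; ring
    · intro n
      have hc : ContinuousAt (fun q : ℝ =>
          q ^ n * (1 + q ^ (2 * n + 1)) / (∑ i ∈ Finset.range (2 * n + 1), q ^ i) ^ 2) 1 := by
        apply ContinuousAt.div
        · fun_prop
        · fun_prop
        · simp [Finset.card_range]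
          positivity
      have ht := hc.tendsto
      have hval : (1:ℝ) ^ n * (1 + 1 ^ (2 * n + 1)) /
          (∑ i ∈ Finset.range (2 * n + 1), (1:ℝ) ^ i) ^ 2 = 2 / (2 * (n:ℝ) + 1) ^ 2 := by
        simp [Finset.card_range]
        push_cast
        ring
      rw [hval] at ht
      exact ht.mono_left nhdsWithin_le_nhds
    · filter_upwards [self_mem_nhdsWithin] with q hq
      intro n
      obtain ⟨hq0, hq1⟩ := hq
      set S : ℝ := ∑ i ∈ Finset.range (2 * n + 1), q ^ i with hS
      have hSpos : 0 < S := Finset.sum_pos (fun i _ => pow_pos hq0 i)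
        ⟨0, Finset.mem_range.mpr (by omega)⟩
      have hklow : ((n / 2 : ℕ) : ℝ) + 1 ≥ ((n:ℝ) + 1) / 2 := by
        have h2 : (n:ℝ) ≤ 2 * ((n / 2 : ℕ) : ℝ) + 1 := by
          have : n ≤ 2 * (n / 2) + 1 := by omega
          exact_mod_cast this
        linarith
      have hSlow : (((n / 2 : ℕ) : ℝ) + 1) * q ^ (n / 2) ≤ S := by
        calc (((n / 2 : ℕ) : ℝ) + 1) * q ^ (n / 2)
            = ∑ _i ∈ Finset.range (n / 2 + 1), q ^ (n / 2) := by
              rw [Finset.sum_const, Finset.card_range, nsmul_eq_mul]; push_cast; ring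
          _ ≤ ∑ i ∈ Finset.range (n / 2 + 1), q ^ i := by
              apply Finset.sum_le_sum
              intro i hi
              exact pow_le_pow_of_le_one hq0.le hq1.le (by
                have := Finset.mem_range.mp hi; omega)
          _ ≤ S := by
              apply Finset.sum_le_sum_of_subset_of_nonneg
              · exact Finset.range_subset_range.mpr (by omega)
              · intro i _ _; positivity
      have hqn : q ^ n ≤ q ^ (2 * (n / 2)) := pow_le_pow_of_le_one hq0.le hq1.le (by omega)
      have hnorm : ‖q ^ n * (1 + q ^ (2 * n + 1)) / S ^ 2‖
          = q ^ n * (1 + q ^ (2 * n + 1)) / S ^ 2 := by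
        rw [Real.norm_eq_abs, abs_of_nonneg]
        have h1 : (0:ℝ) ≤ 1 + q ^ (2 * n + 1) := by positivity
        positivity
      rw [hnorm, div_le_div_iff₀ (by positivity) (by positivity)]
      have hS2 : (((n:ℝ) + 1) / 2) ^ 2 * q ^ n ≤ S ^ 2 := by
        calc (((n:ℝ) + 1) / 2) ^ 2 * q ^ n
            ≤ ((((n / 2 : ℕ) : ℝ)) + 1) ^ 2 * q ^ (2 * (n / 2)) :=
              mul_le_mul (pow_le_pow_left₀ (by positivity) hklow 2) hqn (by positivity)
                (by positivity)
          _ = ((((n / 2 : ℕ) : ℝ) + 1) * q ^ (n / 2)) ^ 2 := by rw [mul_pow, ← pow_mul, Nat.mul_comm]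
          _ ≤ S ^ 2 := pow_le_pow_left₀ (by positivity) hSlow 2
      have hqm1 : q ^ (2 * n + 1) ≤ 1 := pow_le_one₀ hq0.le hq1.le
      nlinarith [pow_pos hq0 n, pow_pos hq0 (2 * n + 1)]
  have hfin : ∑' n : ℕ, 2 / (2 * (n:ℝ) + 1) ^ 2 = π ^ 2 / 4 := by
    have h2 := (odd_basel.mul_left 2).tsum_eq
    have e : (fun n : ℕ => 2 * (1 / (2 * (n:ℝ) + 1) ^ 2)) = fun n : ℕ => 2 / (2 * (n:ℝ) + 1) ^ 2 := by
      funext k; ring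
    rw [e] at h2
    rw [h2]; ring
  rw [hfin] at key
  refine key.congr' ?_
  filter_upwards [self_mem_nhdsWithin] with q hq
  obtain ⟨hq0, hq1⟩ := hq
  rw [← tsum_mul_left]
  apply tsum_congr
  intro n
  have hgeom : (1 : ℝ) - q ^ (2 * n + 1) = (1 - q) * ∑ i ∈ Finset.range (2 * n + 1), q ^ i := by
    have h := geom_sum_mul q (2 * n + 1)
    have : (∑ i ∈ Finset.range (2 * n + 1), q ^ i) * (q - 1) = q ^ (2 * n + 1) - 1 := h
    nlinarith [this]
  have h1q : (1:ℝ) - q ≠ 0 := by intro h; linarith [sub_eq_zero.mp h]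
  rw [hgeom, mul_pow, div_mul_eq_div_div_swap, ← mul_div_assoc,
    mul_div_cancel_left₀ _ (pow_ne_zero 2 h1q)]
end

section
/- For real q with 0 < q < 1, the limit as q tends to 1 from below of (1-q)^4 times the sum over n ≥ 0 of q^{2n}(1+4q^{2n+1}+q^{4n+2})/(1-q^{2n+1})^4 equals π⁴/16. -/
/-!
Writing `1 - q^(2n+1) = (1 - q)(1 + q + ⋯ + q^(2n))`, the `n`-th term of `(1 - q)^4 ∑ …` is
`q^(2n)(1 + 4q^(2n+1) + q^(4n+2)) / (1 + q + ⋯ + q^(2n))^4`, which tends to `6 / (2n+1)^4` as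
`q → 1`. Since `1 + q + ⋯ + q^(2n)` is at least both `1` and `(n+1)q^n`, these terms are bounded by
`6 / (n+1)^2` uniformly in `q ∈ (0, 1)`, so by dominated convergence the limit is
`6 ∑ 1/(2n+1)^4 = 6 (1 - 2⁻⁴) ζ(4) = π⁴/16`.
-/

open Real Filter Set

section

open Finset

lemma hasSum_one_div_two_mul_add_one_pow {p : ℕ} {s : ℝ}
    (h : HasSum (fun n : ℕ => 1 / (n : ℝ) ^ p) s) :
    HasSum (fun n : ℕ => 1 / (2 * n + 1 : ℝ) ^ p) ((1 - 1 / 2 ^ p) * s) := by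
  have heven : HasSum (fun k : ℕ => 1 / ((2 * k : ℕ) : ℝ) ^ p) (1 / 2 ^ p * s) := by
    refine (h.mul_left (1 / 2 ^ p)).congr_fun fun k => ?_
    push_cast
    rw [mul_pow, one_div_mul_one_div]
  obtain ⟨t, hodd⟩ := h.summable.comp_injective (i := fun k => 2 * k + 1)
    fun a b hab => by simp only at hab; omega
  have ht : t = (1 - 1 / 2 ^ p) * s := by
    linarith [h.unique (heven.even_add_odd hodd)]
  rw [← ht]
  refine hodd.congr_fun fun k => ?_
  simp

lemma hasSum_one_div_two_mul_add_one_pow_four :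
    HasSum (fun n : ℕ => 1 / (2 * n + 1 : ℝ) ^ 4) (π ^ 4 / 96) := by
  convert hasSum_one_div_two_mul_add_one_pow hasSum_zeta_four using 1
  ring

lemma succ_mul_pow_le_geom_sum {q : ℝ} (hq₀ : 0 ≤ q) (hq₁ : q ≤ 1) {k n : ℕ} (hk : k < n) :
    (k + 1) * q ^ k ≤ ∑ i ∈ range n, q ^ i := calc
  (k + 1) * q ^ k = ∑ _i ∈ range (k + 1), q ^ k := by simp
  _ ≤ ∑ i ∈ range (k + 1), q ^ i :=
    sum_le_sum fun i hi => pow_le_pow_of_le_one hq₀ hq₁ (Nat.lt_succ_iff.mp (mem_range.mp hi))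
  _ ≤ ∑ i ∈ range n, q ^ i :=
    sum_le_sum_of_subset_of_nonneg (range_subset_range.mpr hk) fun i _ _ => pow_nonneg hq₀ i

lemma one_le_geom_sum {q : ℝ} (hq₀ : 0 ≤ q) {n : ℕ} (hn : n ≠ 0) :
    1 ≤ ∑ i ∈ range n, q ^ i := by
  simpa using single_le_sum (f := fun i => q ^ i) (fun i _ => pow_nonneg hq₀ i)
    (mem_range.mpr (Nat.pos_of_ne_zero hn))

lemma one_sub_pow_mul_div_eq_div_geom_sum_pow {K : Type*} [Field K] {q : K} (hq : q ≠ 1)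
    (a : K) (m k : ℕ) :
    (1 - q) ^ k * (a / (1 - q ^ m) ^ k) = a / (∑ i ∈ range m, q ^ i) ^ k := by
  rw [← mul_neg_geom_sum, mul_pow, ← mul_div_assoc, mul_div_mul_left _ _
    (pow_ne_zero k (sub_ne_zero.mpr hq.symm))]

def sunNumer (q : ℝ) (n : ℕ) : ℝ := q ^ (2 * n) * (1 + 4 * q ^ (2 * n + 1) + q ^ (4 * n + 2))

lemma sunNumer_nonneg {q : ℝ} (hq₀ : 0 ≤ q) (n : ℕ) : 0 ≤ sunNumer q n := by
  unfold sunNumer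
  positivity

lemma sunNumer_le {q : ℝ} (hq₀ : 0 ≤ q) (hq₁ : q ≤ 1) (n : ℕ) :
    sunNumer q n ≤ 6 * q ^ (2 * n) := by
  have h₁ : q ^ (2 * n + 1) ≤ 1 := pow_le_one₀ hq₀ hq₁
  have h₂ : q ^ (4 * n + 2) ≤ 1 := pow_le_one₀ hq₀ hq₁
  unfold sunNumer
  nlinarith [pow_nonneg hq₀ (2 * n)]

lemma sunNumer_div_geom_sum_pow_four_le {q : ℝ} (hq₀ : 0 ≤ q) (hq₁ : q ≤ 1) (n : ℕ) :
    sunNumer q n / (∑ i ∈ range (2 * n + 1), q ^ i) ^ 4 ≤ 6 / ((n : ℝ) + 1) ^ 2 := by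
  set G := ∑ i ∈ range (2 * n + 1), q ^ i
  have hG₁ : 1 ≤ G := one_le_geom_sum hq₀ (by omega)
  have hGn : (n + 1) * q ^ n ≤ G := succ_mul_pow_le_geom_sum hq₀ hq₁ (by omega)
  rw [div_le_div_iff₀ (by positivity) (by positivity)]
  calc sunNumer q n * ((n : ℝ) + 1) ^ 2 ≤ 6 * q ^ (2 * n) * ((n : ℝ) + 1) ^ 2 := by
        gcongr; exact sunNumer_le hq₀ hq₁ n
    _ = 6 * ((n + 1) * q ^ n) ^ 2 := by ring
    _ ≤ 6 * G ^ 2 := by gcongr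
    _ ≤ 6 * G ^ 4 := by gcongr 6 * ?_; exact pow_le_pow_right₀ hG₁ (by norm_num)

lemma tendsto_sunNumer_div_geom_sum_pow_four (n : ℕ) :
    Tendsto (fun q => sunNumer q n / (∑ i ∈ range (2 * n + 1), q ^ i) ^ 4) (nhds 1)
      (nhds (6 / (2 * n + 1 : ℝ) ^ 4)) := by
  have hnumer : Continuous (sunNumer · n) := by unfold sunNumer; fun_prop
  have hG : Continuous fun q : ℝ => ∑ i ∈ range (2 * n + 1), q ^ i := by fun_prop
  have h := (hnumer.tendsto 1).div ((hG.tendsto 1).pow 4) (by simp; positivity)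
  norm_num [sunNumer] at h
  exact h

end

theorem sun_zeta4 :
    Tendsto (fun q : ℝ => (1 - q) ^ 4 *
        ∑' n : ℕ, q ^ (2 * n) * (1 + 4 * q ^ (2 * n + 1) + q ^ (4 * n + 2)) /
          (1 - q ^ (2 * n + 1)) ^ 4)
      (nhdsWithin 1 (Ioo (0 : ℝ) 1)) (nhds (π ^ 4 / 16)) := by
  have hsummable : Summable fun n : ℕ => 6 / ((n : ℝ) + 1) ^ 2 := by
    refine (((summable_nat_add_iff 1).mpr
      (Real.summable_one_div_nat_pow.mpr one_lt_two)).mul_left 6).congr fun n => ?_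
    push_cast
    ring
  have hlim := tendsto_tsum_of_dominated_convergence hsummable
    (fun n => (tendsto_sunNumer_div_geom_sum_pow_four n).mono_left nhdsWithin_le_nhds)
    (eventually_nhdsWithin_of_forall fun q (hq : q ∈ Ioo 0 1) n => by
      rw [Real.norm_of_nonneg (div_nonneg (sunNumer_nonneg hq.1.le n) (by positivity))]
      exact sunNumer_div_geom_sum_pow_four_le hq.1.le hq.2.le n)
  have hsum : ∑' n : ℕ, 6 / (2 * n + 1 : ℝ) ^ 4 = π ^ 4 / 16 := by
    simp_rw [div_eq_mul_one_div (6 : ℝ)]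
    rw [(hasSum_one_div_two_mul_add_one_pow_four.mul_left 6).tsum_eq]
    ring
  rw [hsum] at hlim
  refine hlim.congr' (eventually_nhdsWithin_of_forall fun q (hq : q ∈ Ioo 0 1) => ?_)
  dsimp only
  rw [← tsum_mul_left]
  exact tsum_congr fun n => (one_sub_pow_mul_div_eq_div_geom_sum_pow hq.2.ne _ _ _).symm
end
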